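/- arXiv:2106.03350 — 3 statements merged into one kernel-verified Lean document; each statement's English description precedes it below -/
import Mathlib

section
/- For H ∈ (0,1) and all s,t > 0, the sub-fractional covariance C_H(s,t) = s^{2H} + t^{2H} - (1/2)[(s+t)^{2H} + |s-t|^{2H}] is strictly positive. -/
open Real

/-! Writing `s ^ (2H) = (s²) ^ H`, the claim compares values of the concave, strictly subadditive
function `x ↦ x ^ H` at the points `s², t²` and `(s + t)², (s - t)²`, which have the same sum
`2 (s² + t²)`: subadditivity gives `(s²) ^ H + (t²) ^ H > (s² + t²) ^ H`, and midpoint concavity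
bounds `(s² + t²) ^ H` below by the mean of `((s + t)²) ^ H` and `((s - t)²) ^ H`. -/

namespace Real

theorem rpow_add_lt_add_rpow {p x y : ℝ} (hx : 0 < x) (hy : 0 < y) (hp : p < 1) :
    (x + y) ^ p < x ^ p + y ^ p := by
  have hxy : 0 < x + y := by positivity
  have hp' : p - 1 < 0 := by linarith
  have key : ∀ {z : ℝ}, 0 < z → z < x + y → z * (x + y) ^ (p - 1) < z ^ p := fun {z} hz hzxy => by
    calc z * (x + y) ^ (p - 1) < z * z ^ (p - 1) :=
          mul_lt_mul_of_pos_left (rpow_lt_rpow_of_neg hz hzxy hp') hz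
      _ = z ^ p := by rw [rpow_sub_one hz.ne', mul_div_cancel₀ _ hz.ne']
  calc (x + y) ^ p = x * (x + y) ^ (p - 1) + y * (x + y) ^ (p - 1) := by
        rw [← add_mul, rpow_sub_one hxy.ne', mul_div_cancel₀ _ hxy.ne']
    _ < x ^ p + y ^ p := add_lt_add (key hx (by linarith)) (key hy (by linarith))

theorem add_rpow_le_two_mul_rpow_div_two {p a b : ℝ} (ha : 0 ≤ a) (hb : 0 ≤ b) (hp₀ : 0 ≤ p)
    (hp₁ : p ≤ 1) : a ^ p + b ^ p ≤ 2 * ((a + b) / 2) ^ p := by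
  have := (concaveOn_rpow hp₀ hp₁).2 (Set.mem_Ici.2 ha) (Set.mem_Ici.2 hb)
    (by norm_num : (0 : ℝ) ≤ 1 / 2) (by norm_num : (0 : ℝ) ≤ 1 / 2) (by norm_num)
  simp only [smul_eq_mul] at this
  rw [show (a + b) / 2 = 1 / 2 * a + 1 / 2 * b by ring]
  linarith

end Real

/-- For `H ∈ (0,1)` and `s, t > 0`, the sub-fractional covariance is strictly positive. -/
theorem subfbm_covariance_pos (H : ℝ) (hH : H ∈ Set.Ioo (0 : ℝ) 1)
    (s t : ℝ) (hs : 0 < s) (ht : 0 < t) :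
    0 < s ^ (2*H) + t ^ (2*H) - (1/2) * ((s + t) ^ (2*H) + |s - t| ^ (2*H)) := by
  have rpow_two_mul : ∀ {x : ℝ}, 0 ≤ x → x ^ (2 * H) = (x ^ 2) ^ H := fun hx => by
    rw [rpow_mul hx, rpow_two]
  rw [rpow_two_mul hs.le, rpow_two_mul ht.le, rpow_two_mul (by positivity),
    rpow_two_mul (abs_nonneg _), sq_abs]
  have concave := add_rpow_le_two_mul_rpow_div_two (sq_nonneg (s + t)) (sq_nonneg (s - t))
    hH.1.le hH.2.le
  have subadditive := rpow_add_lt_add_rpow (pow_pos hs 2) (pow_pos ht 2) hH.2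
  have parallelogram : ((s + t) ^ 2 + (s - t) ^ 2) / 2 = s ^ 2 + t ^ 2 := by ring
  rw [parallelogram] at concave
  linarith
end

section
/- Let H ∈ (1/2, 1) and β_H = 2 - 2^{2H-1}. For all 0 ≤ s ≤ t, the second moment of the sub-fBm increment, V(s,t) = C_H(t,t) + C_H(s,s) - 2C_H(s,t), satisfies β_H (t-s)^{2H} ≤ V(s,t) ≤ (t-s)^{2H}, where C_H(s,t) = s^{2H} + t^{2H} - (1/2)[(s+t)^{2H} + |s-t|^{2H}]. -/
/-!
With `p = 2H ∈ (1, 2)` the increment variance is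
`V(s,t) = (s+t)^p + (t-s)^p - 2^(p-1) (s^p + t^p)`.
The upper bound is the power-mean inequality `(s+t)^p ≤ 2^(p-1) (s^p + t^p)`.
For the lower bound put `b = s + t`, `a = t - s` and `c = 2^p - 2`: it becomes
`F a ≤ 0` for `F u = (b+u)^p + (b-u)^p - 2 b^p - c u^p`, where `F 0 = F b = 0`.
The derivative `F' = p g` with `g u = (b+u)^(p-1) - (b-u)^(p-1) - c u^(p-1)` is convex on
`[0, b]` and vanishes at `0`, so it changes sign at most once, from `≤ 0` to `≥ 0`:
`F` first decreases, then increases, and `F a ≤ max (F 0) (F b) = 0`.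
-/

open Real Set

theorem rpow_add_le_two_rpow_sub_one_mul {p s t : ℝ} (hp : 1 ≤ p) (hs : 0 ≤ s) (ht : 0 ≤ t) :
    (s + t) ^ p ≤ 2 ^ (p - 1) * (s ^ p + t ^ p) := by
  exact_mod_cast NNReal.rpow_add_le_mul_rpow_add_rpow ⟨s, hs⟩ ⟨t, ht⟩ hp

theorem le_max_of_hasDerivAt_of_convexOn {F g : ℝ → ℝ} {a b : ℝ}
    (hF : ∀ x, HasDerivAt F (g x) x) (hg : ConvexOn ℝ (Icc 0 b) g) (hg0 : g 0 = 0)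
    (ha : 0 ≤ a) (hab : a ≤ b) : F a ≤ max (F 0) (F b) := by
  rcases ha.eq_or_lt with rfl | ha
  · exact le_max_left _ _
  have hslope : ∀ u v, 0 < u → u ≤ v → v ≤ b → g u / u ≤ g v / v := fun u v hu huv hvb => by
    simpa [hg0] using hg.secant_mono (a := 0) ⟨le_rfl, hu.le.trans (huv.trans hvb)⟩
      ⟨hu.le, huv.trans hvb⟩ ⟨hu.le.trans huv, hvb⟩ hu.ne' (hu.trans_le huv).ne' huv
  have hFcont : ∀ s, ContinuousOn F s := fun s x _ => (hF x).continuousAt.continuousWithinAt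
  rcases le_or_gt (g a) 0 with hga | hga
  · have hanti : AntitoneOn F (Icc 0 a) := by
      refine antitoneOn_of_hasDerivWithinAt_nonpos (convex_Icc 0 a) (hFcont _)
        (fun x _ => (hF x).hasDerivWithinAt) fun x hx => ?_
      rw [interior_Icc] at hx
      have := (hslope x a hx.1 hx.2.le hab).trans (div_nonpos_of_nonpos_of_nonneg hga ha.le)
      simpa using (div_le_iff₀ hx.1).1 this
    exact (hanti ⟨le_rfl, ha.le⟩ ⟨ha.le, le_rfl⟩ ha.le).trans (le_max_left _ _)
  · have hmono : MonotoneOn F (Icc a b) := by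
      refine monotoneOn_of_hasDerivWithinAt_nonneg (convex_Icc a b) (hFcont _)
        (fun x _ => (hF x).hasDerivWithinAt) fun x hx => ?_
      rw [interior_Icc] at hx
      have := (div_pos hga ha).trans_le (hslope a x ha hx.1.le hx.2.le)
      exact (div_pos_iff_of_pos_right (ha.trans hx.1)).1 this |>.le
    exact (hmono ⟨le_rfl, hab⟩ ⟨hab, le_rfl⟩ hab).trans (le_max_right _ _)

theorem convexOn_rpow_add_sub_rpow_sub {b q : ℝ} (hq0 : 0 ≤ q) (hq1 : q ≤ 1) :
    ConvexOn ℝ (Icc 0 b) fun u => (b + u) ^ q - (b - u) ^ q := by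
  have hderiv : ∀ r, ∀ x ∈ Ioo 0 b,
      HasDerivAt (fun u => (b + u) ^ r) (r * (b + x) ^ (r - 1)) x ∧
        HasDerivAt (fun u => (b - u) ^ r) (-(r * (b - x) ^ (r - 1))) x := fun r x ⟨hx0, hxb⟩ =>
    ⟨(hasDerivAt_rpow_const (Or.inl (by linarith : 0 < b + x).ne')).comp_const_add b x,
      (hasDerivAt_rpow_const (Or.inl (sub_pos.2 hxb).ne')).comp_const_sub b x⟩
  refine convexOn_of_hasDerivWithinAt2_nonneg (convex_Icc 0 b)
    (f' := fun u => q * (b + u) ^ (q - 1) + q * (b - u) ^ (q - 1))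
    (f'' := fun u => q * (q - 1) * (b + u) ^ (q - 2) - q * (q - 1) * (b - u) ^ (q - 2))
    (Continuous.continuousOn (by fun_prop (disch := exact Or.inr hq0))) ?_ ?_ ?_ <;>
    rw [interior_Icc]
  · intro x hx
    obtain ⟨hadd, hsub⟩ := hderiv q x hx
    exact ((hadd.sub hsub).congr_deriv (by ring)).hasDerivWithinAt
  · intro x hx
    obtain ⟨hadd, hsub⟩ := hderiv (q - 1) x hx
    exact (((hadd.const_mul q).add (hsub.const_mul q)).congr_deriv (by ring_nf)).hasDerivWithinAt
  · rintro x ⟨hx0, hxb⟩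
    have hle : (b + x) ^ (q - 2) ≤ (b - x) ^ (q - 2) :=
      rpow_le_rpow_of_nonpos (by linarith) (by linarith) (by linarith)
    have hq : q * (q - 1) ≤ 0 := mul_nonpos_of_nonneg_of_nonpos hq0 (by linarith)
    rw [← mul_sub]
    exact mul_nonneg_of_nonpos_of_nonpos hq (sub_nonpos.2 hle)

theorem rpow_add_add_rpow_sub_le {p a b : ℝ} (hp1 : 1 ≤ p) (hp2 : p ≤ 2) (ha : 0 ≤ a)
    (hab : a ≤ b) : (b + a) ^ p + (b - a) ^ p ≤ 2 * b ^ p + (2 ^ p - 2) * a ^ p := by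
  rcases hp1.eq_or_lt with rfl | hp1
  · norm_num
    linarith
  set c : ℝ := 2 ^ p - 2
  have hc : 0 ≤ c := by
    have := rpow_le_rpow_of_exponent_le one_le_two hp1.le
    rw [rpow_one] at this
    linarith
  have hF : ∀ x, HasDerivAt (fun u => (b + u) ^ p + (b - u) ^ p - 2 * b ^ p - c * u ^ p)
      (p * ((b + x) ^ (p - 1) - (b - x) ^ (p - 1) - c * x ^ (p - 1))) x := fun x => by
    have hadd := (hasDerivAt_rpow_const (x := b + x) (Or.inr hp1.le)).comp_const_add b x
    have hsub := (hasDerivAt_rpow_const (x := b - x) (Or.inr hp1.le)).comp_const_sub b x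
    have h := (hasDerivAt_rpow_const (x := x) (Or.inr hp1.le)).const_mul c
    exact (((hadd.add hsub).sub_const _).sub h).congr_deriv (by ring)
  have hg : ConvexOn ℝ (Icc 0 b)
      fun x => p * ((b + x) ^ (p - 1) - (b - x) ^ (p - 1) - c * x ^ (p - 1)) := by
    have hpow := ((concaveOn_rpow (sub_nonneg.2 hp1.le) (by linarith)).neg.smul hc).subset
      Icc_subset_Ici_self (convex_Icc 0 b)
    refine (((convexOn_rpow_add_sub_rpow_sub (sub_nonneg.2 hp1.le) (by linarith)).add
      hpow).smul (by linarith : (0 : ℝ) ≤ p)).congr fun x _ => ?_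
    simp only [Pi.add_apply, Pi.neg_apply, smul_eq_mul]
    ring
  have hp0 : p ≠ 0 := by linarith
  have hF0 : (b + 0) ^ p + (b - 0) ^ p - 2 * b ^ p - c * 0 ^ p = 0 := by
    rw [add_zero, sub_zero, zero_rpow hp0]; ring
  have hFb : (b + b) ^ p + (b - b) ^ p - 2 * b ^ p - c * b ^ p = 0 := by
    rw [← two_mul, mul_rpow zero_le_two (ha.trans hab), sub_self, zero_rpow hp0]; ring
  have hmax := le_max_of_hasDerivAt_of_convexOn hF hg
    (by simp [zero_rpow (sub_pos.2 hp1).ne']) ha hab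
  beta_reduce at hmax
  rw [hF0, hFb, max_self] at hmax
  linarith

theorem two_rpow_sub_one_mul_add_le {p s t : ℝ} (hp1 : 1 ≤ p) (hp2 : p ≤ 2) (hs : 0 ≤ s)
    (hst : s ≤ t) :
    2 ^ (p - 1) * (s ^ p + t ^ p) ≤ (s + t) ^ p + (2 ^ (p - 1) - 1) * (t - s) ^ p := by
  have key := rpow_add_add_rpow_sub_le hp1 hp2 (sub_nonneg.2 hst) (by linarith : t - s ≤ s + t)
  rw [show s + t + (t - s) = 2 * t by ring, show s + t - (t - s) = 2 * s by ring,
    mul_rpow zero_le_two (hs.trans hst), mul_rpow zero_le_two hs] at key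
  rw [rpow_sub_one two_ne_zero]
  linarith

/-- For `H ∈ (1/2,1)` and `0 ≤ s ≤ t`, the second moment of the sub-fBm increment
`V(s,t) = C_H(t,t) + C_H(s,s) - 2 C_H(s,t)` satisfies
`β_H (t-s)^{2H} ≤ V(s,t) ≤ (t-s)^{2H}` where `β_H = 2 - 2^{2H-1}`. -/
theorem subfbm_increment_variance_bounds_high (H : ℝ) (hH : H ∈ Set.Ioo (1/2 : ℝ) 1)
    (βH : ℝ) (hβH : βH = 2 - 2 ^ (2*H - 1))
    (C : ℝ → ℝ → ℝ)
    (hC : ∀ s t : ℝ, C s t =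
      s ^ (2*H) + t ^ (2*H) - (1/2) * ((s + t) ^ (2*H) + |s - t| ^ (2*H)))
    (s t : ℝ) (hs : 0 ≤ s) (hst : s ≤ t) :
    βH * (t - s) ^ (2*H) ≤ C t t + C s s - 2 * C s t ∧
      C t t + C s s - 2 * C s t ≤ (t - s) ^ (2*H) := by
  have hp1 : 1 ≤ 2 * H := by linarith [hH.1]
  have hp2 : 2 * H ≤ 2 := by linarith [hH.2]
  have hV : C t t + C s s - 2 * C s t =
      (s + t) ^ (2 * H) + (t - s) ^ (2 * H) - 2 ^ (2 * H - 1) * (s ^ (2 * H) + t ^ (2 * H)) := by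
    rw [hC, hC, hC, sub_self, sub_self, abs_zero, abs_sub_comm, abs_of_nonneg (sub_nonneg.2 hst),
      zero_rpow (by linarith), ← two_mul t, ← two_mul s, mul_rpow zero_le_two hs,
      mul_rpow zero_le_two (hs.trans hst), rpow_sub_one two_ne_zero]
    ring
  rw [hV, hβH]
  constructor
  · linarith [two_rpow_sub_one_mul_add_le hp1 hp2 hs hst]
  · linarith [rpow_add_le_two_rpow_sub_one_mul hp1 hs (hs.trans hst)]
end

section
/- Let H ∈ (0, 1/2) and β_H = 2 - 2^{2H-1}. For all 0 ≤ s ≤ t, the increment second moment V(s,t) = -2^{2H-1}(t^{2H} + s^{2H}) + (s+t)^{2H} + (t-s)^{2H} satisfies (t-s)^{2H} ≤ V(s,t) ≤ β_H (t-s)^{2H}. -/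
/-!
Write `α = 2H ∈ (0, 1)` and `c = 2^(α-1)`. The lower bound is midpoint concavity of `x ↦ x^α`:
`c (s^α + t^α) ≤ (s + t)^α`. For the upper bound, the function
`φ(x) = c x^α + (1 - c)(t - x)^α - (x + t)^α` is concave on `[0, t]`, because its second derivative
`α(α - 1)(c x^(α-2) + (1 - c)(t - x)^(α-2) - (x + t)^(α-2))` is nonpositive (`x + t` dominates both
`x` and `t - x`). Hence `φ(s)` is at least `min (φ 0) (φ t) = -c t^α`, which is the upper bound.
-/

open Real Set

section
variable {α : ℝ}

lemma two_rpow_sub_one_mul_rpow_add_rpow_le (hα0 : 0 ≤ α) (hα1 : α ≤ 1) {x y : ℝ}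
    (hx : 0 ≤ x) (hy : 0 ≤ y) : 2 ^ (α - 1) * (x ^ α + y ^ α) ≤ (x + y) ^ α := by
  have hmid := (concaveOn_rpow hα0 hα1).2 hx hy (by norm_num : (0 : ℝ) ≤ 1 / 2)
    (by norm_num : (0 : ℝ) ≤ 1 / 2) (by norm_num)
  simp only [smul_eq_mul] at hmid
  calc 2 ^ (α - 1) * (x ^ α + y ^ α) = 2 ^ α * (1 / 2 * x ^ α + 1 / 2 * y ^ α) := by
        rw [rpow_sub_one two_ne_zero]; ring
    _ ≤ 2 ^ α * (1 / 2 * x + 1 / 2 * y) ^ α := by gcongr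
    _ = (x + y) ^ α := by rw [← mul_rpow zero_le_two (by positivity)]; ring_nf

lemma hasDerivAt_rpow_combination (p a b d t : ℝ) {x : ℝ} (hx : 0 < x) (hxt : x < t) :
    HasDerivAt (fun y => a * y ^ p + b * (t - y) ^ p + d * (y + t) ^ p)
      (p * a * x ^ (p - 1) + -(p * b) * (t - x) ^ (p - 1) + p * d * (x + t) ^ (p - 1)) x := by
  have hy := hasDerivAt_rpow_const (p := p) (Or.inl hx.ne')
  have hty := ((hasDerivAt_id x).const_sub t).rpow_const (p := p) (Or.inl (sub_pos.2 hxt).ne')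
  have hyt := ((hasDerivAt_id x).add_const t).rpow_const (p := p)
    (Or.inl (add_pos hx (hx.trans hxt)).ne')
  exact (((hy.const_mul a).add (hty.const_mul b)).add (hyt.const_mul d)).congr_deriv
    (by simp only [id]; ring)

lemma concaveOn_rpow_combination (hα0 : 0 ≤ α) (hα1 : α ≤ 1) {c : ℝ} (hc0 : 0 ≤ c) (hc1 : c ≤ 1)
    (t : ℝ) : ConcaveOn ℝ (Icc 0 t) (fun x => c * x ^ α + (1 - c) * (t - x) ^ α - (x + t) ^ α) := by
  have hf : (fun x => c * x ^ α + (1 - c) * (t - x) ^ α - (x + t) ^ α) =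
      fun x => c * x ^ α + (1 - c) * (t - x) ^ α + -1 * (x + t) ^ α := by
    funext x; ring
  rw [hf]
  have hint : ∀ x ∈ interior (Icc 0 t), 0 < x ∧ x < t := fun x hx => by rwa [interior_Icc] at hx
  refine concaveOn_of_hasDerivWithinAt2_nonpos (convex_Icc 0 t) (by fun_prop)
    (fun x hx => (hasDerivAt_rpow_combination α c (1 - c) (-1) t
      (hint x hx).1 (hint x hx).2).hasDerivWithinAt)
    (fun x hx => (hasDerivAt_rpow_combination (α - 1) (α * c) (-(α * (1 - c))) (α * -1) t
      (hint x hx).1 (hint x hx).2).hasDerivWithinAt) (fun x hx => ?_)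
  obtain ⟨hx0, hxt⟩ := hint x hx
  have hxa : (x + t) ^ (α - 1 - 1) ≤ x ^ (α - 1 - 1) :=
    rpow_le_rpow_of_nonpos hx0 (by linarith) (by linarith)
  have hxb : (x + t) ^ (α - 1 - 1) ≤ (t - x) ^ (α - 1 - 1) :=
    rpow_le_rpow_of_nonpos (by linarith) (by linarith) (by linarith)
  have hbr : 0 ≤ c * x ^ (α - 1 - 1) + (1 - c) * (t - x) ^ (α - 1 - 1) - (x + t) ^ (α - 1 - 1) := by
    nlinarith
  have hα : α * (α - 1) ≤ 0 := mul_nonpos_of_nonneg_of_nonpos hα0 (by linarith)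
  linarith [mul_nonpos_of_nonpos_of_nonneg hα hbr]

lemma add_rpow_le_two_rpow_sub_one_mul_add_rpow_sub (hα0 : 0 < α) (hα1 : α ≤ 1) {s t : ℝ}
    (hs : 0 ≤ s) (hst : s ≤ t) :
    (s + t) ^ α ≤ 2 ^ (α - 1) * (t ^ α + s ^ α) + (1 - 2 ^ (α - 1)) * (t - s) ^ α := by
  set c : ℝ := 2 ^ (α - 1) with hc
  have ht : 0 ≤ t := hs.trans hst
  have hc1 : c ≤ 1 := rpow_le_one_of_one_le_of_nonpos one_le_two (by linarith)
  have hmin := (concaveOn_rpow_combination hα0.le hα1 (by positivity) hc1 t).ge_on_segment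
    (left_mem_Icc.2 ht) (right_mem_Icc.2 ht) (Icc_subset_segment ⟨hs, hst⟩)
  have h2t : (t + t) ^ α = 2 * c * t ^ α := by
    rw [← two_mul, mul_rpow zero_le_two ht, hc, ← rpow_one_add' zero_le_two (by linarith)]
    ring_nf
  have h0 : c * 0 ^ α + (1 - c) * (t - 0) ^ α - (0 + t) ^ α = -(c * t ^ α) := by
    rw [zero_rpow hα0.ne', sub_zero, zero_add]; ring
  have htt : c * t ^ α + (1 - c) * (t - t) ^ α - (t + t) ^ α = -(c * t ^ α) := by
    rw [sub_self, zero_rpow hα0.ne', h2t]; ring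
  beta_reduce at hmin
  rw [h0, htt, min_self] at hmin
  linarith
end

/-- For `H ∈ (0,1/2)` and `0 ≤ s ≤ t`, the increment second moment
`V(s,t) = -2^{2H-1}(t^{2H}+s^{2H}) + (s+t)^{2H} + (t-s)^{2H}` satisfies
`(t-s)^{2H} ≤ V(s,t) ≤ β_H (t-s)^{2H}` where `β_H = 2 - 2^{2H-1}`. -/
theorem subfbm_increment_variance_bounds_low (H : ℝ) (hH : H ∈ Set.Ioo (0 : ℝ) (1/2))
    (βH : ℝ) (hβH : βH = 2 - 2 ^ (2*H - 1))
    (V : ℝ → ℝ → ℝ)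
    (hV : ∀ s t : ℝ, V s t =
      -(2 ^ (2*H - 1)) * (t ^ (2*H) + s ^ (2*H)) + (s + t) ^ (2*H) + (t - s) ^ (2*H))
    (s t : ℝ) (hs : 0 ≤ s) (hst : s ≤ t) :
    (t - s) ^ (2*H) ≤ V s t ∧ V s t ≤ βH * (t - s) ^ (2*H) := by
  obtain ⟨hH0, hH1⟩ := hH
  have lower := two_rpow_sub_one_mul_rpow_add_rpow_le (α := 2 * H) (by linarith) (by linarith)
    (hs.trans hst) hs
  have upper := add_rpow_le_two_rpow_sub_one_mul_add_rpow_sub (α := 2 * H) (by linarith)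
    (by linarith) hs hst
  rw [add_comm t s] at lower
  rw [hV, hβH]
  constructor <;> linarith
end
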